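/- arXiv:2011.14524 — 3 statements merged into one kernel-verified Lean document; each statement's English description precedes it below -/
import Mathlib

section
/- Let p be prime, G cyclic of order p with generator σ, and M a finitely generated torsion-free ℤ[G]-module with M^G = 0. Then the rank of M as an abelian group is divisible by p - 1. -/
/-!
Write `g` for the `ℤ`-linear endomorphism `σ` of `M`. Since `g - 1` is injective and
`(g - 1)(1 + g + ⋯ + g^{p-1}) = g^p - 1 = 0`, the endomorphism `g` is killed by the cyclotomic
polynomial `Φ_p = 1 + X + ⋯ + X^{p-1}`. Hence so is its extension to `ℚ ⊗ M`, which thereby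
becomes a vector space over the field `ℚ[X]/(Φ_p)` of degree `p - 1` over `ℚ`; the tower law and
`dim_ℚ (ℚ ⊗ M) = rank_ℤ M` give the divisibility.
-/

open Polynomial Module

theorem AddAut.nsmul_apply {M : Type*} [Add M] (σ : AddAut M) (n : ℕ) (m : M) :
    (n • σ) m = σ^[n] m := by
  induction n generalizing m with
  | zero => rfl
  | succ n ih => rw [succ_nsmul, AddAut.add_apply, ih, Function.iterate_succ_apply]

namespace Module.End

variable {R V : Type*} [CommRing R] [AddCommGroup V] [Module R V]

theorem geom_sum_eq_zero_of_pow_eq_one {f : End R V} {n : ℕ} (hf : f ^ n = 1)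
    (hinj : Function.Injective ⇑(f - 1)) : ∑ i ∈ Finset.range n, f ^ i = 0 := by
  have h : (f - 1) * ∑ i ∈ Finset.range n, f ^ i = 0 := by rw [mul_geom_sum, hf, sub_self]
  ext v
  exact hinj (by simpa using congr($h v))

theorem aeval_cyclotomic_prime_eq_zero {p : ℕ} (hp : p.Prime) {f : End R V} (hf : f ^ p = 1)
    (hinj : Function.Injective ⇑(f - 1)) : aeval f (cyclotomic p R) = 0 := by
  have := Fact.mk hp
  simpa [cyclotomic_prime, map_sum] using geom_sum_eq_zero_of_pow_eq_one hf hinj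

end Module.End

theorem LinearMap.aeval_baseChange {R A M : Type*} [CommRing R] [CommRing A] [Algebra R A]
    [AddCommGroup M] [Module R M] (f : End R M) (q : R[X]) :
    aeval (f.baseChange A) (q.map (algebraMap R A)) = (aeval f q).baseChange A := by
  rw [aeval_map_algebraMap]
  exact aeval_algHom_apply (End.baseChangeHom R A M) f q

section

variable {F V : Type*} [Field F] [AddCommGroup V] [Module F V]

theorem Module.finrank_dvd_finrank_of_algHom {K : Type*} [Field K] [Algebra F K]
    (φ : K →ₐ[F] End F V) : finrank F K ∣ finrank F V := by
  let : Module K V := Module.compHom V φ.toRingHom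
  have : IsScalarTower F K V := ⟨fun a k v => by
    change φ (a • k) v = a • φ k v
    rw [map_smul, LinearMap.smul_apply]⟩
  exact Dvd.intro _ (finrank_mul_finrank F K V)

theorem Polynomial.natDegree_dvd_finrank_of_aeval_eq_zero {q : F[X]} (hq : Irreducible q)
    {f : End F V} (hf : aeval f q = 0) : q.natDegree ∣ finrank F V := by
  have := Fact.mk hq
  rw [← finrank_quotient_span_eq_natDegree]
  let φ : AdjoinRoot q →ₐ[F] End F V := Ideal.Quotient.liftₐ _ (aeval f) fun a ha => by
    obtain ⟨b, rfl⟩ := Ideal.mem_span_singleton'.1 ha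
    rw [map_mul, hf, mul_zero]
  exact finrank_dvd_finrank_of_algHom φ

end

theorem stmt_4_general {p : ℕ} (hp : p.Prime) {M : Type*} [AddCommGroup M]
    (σ : AddAut M) (hσ : p • σ = 0)
    (hinv : ∀ m : M, σ m = m → m = 0) :
    (p - 1) ∣ Module.finrank ℤ M := by
  let g : End ℤ M := σ.toIntLinearEquiv.toLinearMap
  have hgp : g ^ p = 1 := by
    ext m
    simp [g, End.pow_apply, ← AddAut.nsmul_apply, hσ]
  have hinj : Function.Injective ⇑(g - 1) :=
    (injective_iff_map_eq_zero _).2 fun m hm => hinv m (sub_eq_zero.1 hm)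
  have hΦ : aeval (g.baseChange ℚ) (cyclotomic p ℚ) = 0 := by
    rw [← map_cyclotomic p (algebraMap ℤ ℚ), LinearMap.aeval_baseChange,
      End.aeval_cyclotomic_prime_eq_zero hp hgp hinj, LinearMap.baseChange_zero]
  have hdvd := natDegree_dvd_finrank_of_aeval_eq_zero (cyclotomic.irreducible_rat hp.pos) hΦ
  rwa [natDegree_cyclotomic, Nat.totient_prime hp,
    (TensorProduct.isBaseChange ℤ M ℚ).finrank_eq] at hdvd

/-- let `p` be prime, `G` cyclic of order `p` with generator `σ`, and `M` a
finitely generated torsion-free `ℤ[G]`-module (modeled by a f.g. torsion-free abelian group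
with an additive automorphism `σ` satisfying `σ^p = 1`) with `M^G = 0`.  Then the rank of `M`
as an abelian group is divisible by `p - 1`. -/
theorem stmt_4 {p : ℕ} (hp : p.Prime) {M : Type*} [AddCommGroup M]
    [Module.Finite ℤ M] [NoZeroSMulDivisors ℤ M]
    (σ : AddAut M) (hσ : p • σ = 0)
    (hinv : ∀ m : M, σ m = m → m = 0) :
    (p - 1) ∣ Module.finrank ℤ M :=
  stmt_4_general hp σ hσ hinv
end

section
/- Let G be cyclic of prime order p with generator σ acting on an abelian group A with A^G = 0 (so the trace map is zero on A), and suppose A is finitely generated, torsion-free, and nonzero. Then H¹(G,A) ≅ (ℤ/pℤ)^r where r·(p-1) = rank_ℤ A; in particular H¹(G,A) ≠ 0. -/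
/-!
Write `τ = σ - 1`. It is injective because `A^G = 0`, so `τ Φ_p(σ) = σ^p - 1 = 0` forces
`Φ_p(σ) = 0`: `A` is a module over `ℤ[ζ_p]` on which `τ` acts as `ζ_p - 1`. Since
`Φ_p ≡ (X - 1)^(p-1) mod p` and `Φ_p(1) = p`, the elements `(ζ_p - 1)^(p-1)` and `p` generate the
same ideal of `ℤ[ζ_p]`, so `τ^(p-1) A = p A`. Indices of images of injective endomorphisms
multiply, hence `[A : τA]^(p-1) = [A : pA] = p^(rank A)`, so `[A : τA] = p^r` with
`r (p-1) = rank A`, and `A/τA`, being killed by `p`, is `𝔽_p^r`.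
-/

open Polynomial

/-- Modulo `(f, y ^ n)` we have `c * (1 + y * v) = 0`, and `1 + y * v` is a unit modulo `y ^ n`. -/
theorem exists_eq_pow_mul_add_mul {R : Type*} [CommRing R] {f y c v : R} (n : ℕ)
    (h : f = y ^ n + c * (1 + y * v)) : ∃ a b, c = y ^ n * a + f * b := by
  set u := -(y * v) with hu
  set S := ∑ i ∈ Finset.range n, u ^ i
  have hgeom : (1 - u) * S = 1 - u ^ n := mul_neg_geom_sum u n
  have hun : u ^ n = y ^ n * (-v) ^ n := by rw [← mul_pow, mul_neg]
  refine ⟨c * (-v) ^ n - S, S, ?_⟩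
  linear_combination (-c) * hgeom - S * h + c * hun + c * S * hu

namespace Polynomial

variable (p : ℕ) [hp : Fact p.Prime]

theorem exists_cyclotomic_prime_int_eq_X_sub_one_pow_add :
    ∃ g : ℤ[X], cyclotomic p ℤ = (X - 1) ^ (p - 1) + C (p : ℤ) * g := by
  have hmodp : cyclotomic p (ZMod p) = (X - 1) ^ (p - 1) := by
    simpa using cyclotomic_mul_prime_eq_pow_of_not_dvd (ZMod p) (n := 1) hp.out.not_dvd_one
  have hker : cyclotomic p ℤ - (X - 1) ^ (p - 1) ∈
      RingHom.ker (mapRingHom (Int.castRingHom (ZMod p))) := by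
    simp [hmodp]
  rw [ker_mapRingHom, ZMod.ker_intCastRingHom, Ideal.map_span, Set.image_singleton,
    Ideal.mem_span_singleton] at hker
  obtain ⟨g, hg⟩ := hker
  exact ⟨g, eq_add_of_sub_eq' hg⟩

theorem exists_cyclotomic_prime_int_eq :
    ∃ v : ℤ[X], cyclotomic p ℤ = (X - 1) ^ (p - 1) + C (p : ℤ) * (1 + (X - 1) * v) := by
  obtain ⟨g, hg⟩ := exists_cyclotomic_prime_int_eq_X_sub_one_pow_add p
  have hg1 : g.eval 1 = 1 := by
    have h := congrArg (eval 1) hg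
    rw [eval_one_cyclotomic_prime, eval_add, eval_mul, eval_pow, eval_sub, eval_X, eval_one,
      sub_self, zero_pow (Nat.sub_ne_zero_of_lt hp.out.one_lt), eval_C, zero_add] at h
    exact (mul_eq_left₀ (by exact_mod_cast hp.out.ne_zero)).mp h.symm
  obtain ⟨v, hv⟩ : X - C 1 ∣ g - 1 := dvd_iff_isRoot.mpr (by simp [hg1])
  rw [C_1] at hv
  exact ⟨v, by rw [hg, ← hv, add_sub_cancel]⟩

theorem exists_C_prime_eq_X_sub_one_pow_mul_add_cyclotomic_mul :
    ∃ a b : ℤ[X], C (p : ℤ) = (X - 1) ^ (p - 1) * a + cyclotomic p ℤ * b :=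
  (exists_cyclotomic_prime_int_eq p).elim fun _ hv => exists_eq_pow_mul_add_mul _ hv

variable {p}

theorem aeval_cyclotomic_prime_eq_zero {R : Type*} [Ring R] {s : R} (hs : s ^ p = 1)
    (hreg : IsLeftRegular (s - 1)) : aeval s (cyclotomic p ℤ) = 0 := by
  have h : aeval s ((X - 1) * cyclotomic p ℤ) = 0 := by
    rw [mul_comm, cyclotomic_prime_mul_X_sub_one]; simp [hs]
  refine hreg ?_
  simpa using h

end Polynomial

theorem AddAut.coe_nsmul {A : Type*} [Add A] (σ : AddAut A) (n : ℕ) : ⇑(n • σ) = (⇑σ)^[n] := by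
  induction n with
  | zero => rfl
  | succ n ih => rw [succ_nsmul, AddAut.coe_add, ih, Function.iterate_succ]

theorem nonempty_addEquiv_pi_zmod_of_natCard_eq {V : Type*} [AddCommGroup V] {p d : ℕ}
    [hp : Fact p.Prime] [Module (ZMod p) V] [Finite V] (hcard : Nat.card V = p ^ d) :
    Nonempty (V ≃+ (Fin d → ZMod p)) := by
  have : Module.Finite (ZMod p) V := .of_finite
  have hrank : Module.finrank (ZMod p) V = d := by
    rw [Module.natCard_eq_pow_finrank (K := ZMod p), Nat.card_zmod] at hcard
    exact Nat.pow_right_injective hp.out.two_le hcard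
  exact ⟨(Module.finBasisOfFinrankEq (ZMod p) V hrank).equivFun.toAddEquiv⟩

theorem QuotientAddGroup.nonempty_addEquiv_pi_zmod {G : Type*} [AddCommGroup G]
    {H : AddSubgroup G} {p d : ℕ} [hp : Fact p.Prime] (hH : ∀ x, p • x ∈ H)
    (hidx : H.index = p ^ d) : Nonempty ((G ⧸ H) ≃+ (Fin d → ZMod p)) := by
  let _ := QuotientAddGroup.zmodModule hH
  have : Finite (G ⧸ H) := Nat.finite_of_card_ne_zero (by
    rw [← AddSubgroup.index_eq_card, hidx]; exact pow_ne_zero d hp.out.ne_zero)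
  exact nonempty_addEquiv_pi_zmod_of_natCard_eq hidx

namespace AddMonoid.End

variable {A : Type*} [AddCommGroup A]

theorem isLeftRegular_of_injective {f : AddMonoid.End A} (hf : Function.Injective f) :
    IsLeftRegular f := fun _ _ hgh => AddMonoidHom.ext fun a => hf (DFunLike.congr_fun hgh a)

theorem range_mul_le (f g : AddMonoid.End A) :
    AddMonoidHom.range (f * g : AddMonoid.End A) ≤ AddMonoidHom.range f := by
  rintro _ ⟨a, rfl⟩; exact ⟨g a, rfl⟩

theorem index_range_pow {f : AddMonoid.End A} (hf : Function.Injective f) (k : ℕ) :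
    (AddMonoidHom.range (f ^ k : AddMonoid.End A)).index = (AddMonoidHom.range f).index ^ k := by
  induction k with
  | zero =>
    rw [pow_zero, pow_zero]
    exact AddSubgroup.index_eq_one.mpr ((AddSubgroup.eq_top_iff' _).mpr fun a => ⟨a, rfl⟩)
  | succ k ih =>
    have hfk : Function.Injective (f ^ k) := by
      rw [AddMonoid.End.coe_pow]; exact hf.iterate k
    rw [pow_succ, pow_succ, ← ih, mul_comm]
    exact congrArg AddSubgroup.index ((f ^ k).range_comp f) |>.trans
      (AddSubgroup.index_map_of_injective _ hfk)

variable {p : ℕ} [hp : Fact p.Prime] {s : AddMonoid.End A}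

theorem range_sub_one_pow_eq_range_nsmul (hs : s ^ p = 1) (hinj : Function.Injective ⇑(s - 1)) :
    AddMonoidHom.range ((s - 1) ^ (p - 1) : AddMonoid.End A) =
      (nsmulAddMonoidHom (α := A) p).range := by
  have hΦ := aeval_cyclotomic_prime_eq_zero hs (isLeftRegular_of_injective hinj)
  have hsub : aeval s (X - 1 : ℤ[X]) = s - 1 := by simp
  change _ = AddMonoidHom.range (p : AddMonoid.End A)
  apply le_antisymm
  · obtain ⟨v, hv⟩ := exists_cyclotomic_prime_int_eq p
    have h := congrArg (aeval s) hv
    rw [hΦ, map_add, map_mul, map_pow, hsub, aeval_C, map_natCast, eq_comm,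
      add_eq_zero_iff_eq_neg, ← mul_neg] at h
    exact h ▸ range_mul_le _ _
  · obtain ⟨a, b, hab⟩ := exists_C_prime_eq_X_sub_one_pow_mul_add_cyclotomic_mul p
    have h := congrArg (aeval s) hab
    rw [map_add, map_mul, map_mul, hΦ, zero_mul, add_zero, map_pow, hsub, aeval_C,
      map_natCast] at h
    exact h ▸ range_mul_le _ _

theorem nsmul_mem_range_sub_one (hs : s ^ p = 1) (hinj : Function.Injective ⇑(s - 1)) (a : A) :
    p • a ∈ AddMonoidHom.range (s - 1 : AddMonoid.End A) := by
  obtain ⟨k, hk⟩ : ∃ k, p - 1 = k + 1 := ⟨p - 2, by have := hp.out.two_le; omega⟩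
  have h : p • a ∈ AddMonoidHom.range ((s - 1) ^ (p - 1) : AddMonoid.End A) := by
    rw [range_sub_one_pow_eq_range_nsmul hs hinj]; exact ⟨a, rfl⟩
  rw [hk, pow_succ'] at h
  exact range_mul_le _ _ h

theorem exists_index_range_sub_one_eq_pow [Module.Finite ℤ A] [NoZeroSMulDivisors ℤ A]
    (hs : s ^ p = 1) (hinj : Function.Injective ⇑(s - 1)) :
    ∃ d, (AddMonoidHom.range (s - 1 : AddMonoid.End A)).index = p ^ d ∧
      d * (p - 1) = Module.finrank ℤ A := by
  have h : (AddMonoidHom.range (s - 1 : AddMonoid.End A)).index ^ (p - 1) =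
      p ^ Module.finrank ℤ A := by
    rw [← index_range_pow hinj, range_sub_one_pow_eq_range_nsmul hs hinj,
      AddSubgroup.index_range_nsmul]
  obtain ⟨d, hd⟩ := Nat.exists_base_eq_prime_pow_of_prime_pow_eq_base_pow hp.out
    (Nat.sub_ne_zero_of_lt hp.out.one_lt) h.symm
  refine ⟨d, hd, Nat.pow_right_injective hp.out.two_le ?_⟩
  simp only [pow_mul, ← hd, h]

end AddMonoid.End

theorem stmt_6_general {p : ℕ} (hp : p.Prime) {A : Type*} [AddCommGroup A]
    [Module.Finite ℤ A] [NoZeroSMulDivisors ℤ A] [Nontrivial A]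
    (σ : AddAut A) (hσ : p • σ = 0)
    (hinv : ∀ a : A, σ a = a → a = 0) :
    ∃ r : ℕ, 0 < r ∧ r * (p - 1) = Module.finrank ℤ A ∧
      Nonempty ((A ⧸ (AddMonoidHom.id A - AddEquiv.toAddMonoidHom (σ : A ≃+ A)).range)
        ≃+ (Fin r → ZMod p)) := by
  have : Fact p.Prime := ⟨hp⟩
  let s : AddMonoid.End A := σ.toAddMonoidHom
  have hs : s ^ p = 1 := DFunLike.ext _ _ fun a => by
    rw [AddMonoid.End.coe_pow]
    exact congrFun ((AddAut.coe_nsmul σ p).symm.trans (by rw [hσ]; rfl)) a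
  have hsub : ∀ a, (s - 1) a = σ a - a := fun _ => rfl
  have hinj : Function.Injective ⇑(s - 1) := (injective_iff_map_eq_zero _).mpr fun a ha =>
    hinv a (sub_eq_zero.mp (hsub a ▸ ha))
  have hrange : (AddMonoidHom.id A - σ.toAddMonoidHom).range =
      AddMonoidHom.range (s - 1 : AddMonoid.End A) := by
    ext x
    constructor <;> rintro ⟨a, rfl⟩ <;> refine ⟨-a, ?_⟩
    · exact (hsub (-a)).trans (by simp [sub_eq_add_neg, add_comm])
    · exact (by simp [sub_eq_add_neg, add_comm] : _ = σ a - a).trans (hsub a).symm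
  obtain ⟨d, hidx, hrank⟩ := AddMonoid.End.exists_index_range_sub_one_eq_pow hs hinj
  refine ⟨d, Nat.pos_of_ne_zero ?_, hrank, ?_⟩
  · rintro rfl
    exact Module.finrank_pos.ne (by rw [← hrank, zero_mul])
  · rw [hrange]
    exact QuotientAddGroup.nonempty_addEquiv_pi_zmod
      (AddMonoid.End.nsmul_mem_range_sub_one hs hinj) hidx

/-- let `G` be cyclic of prime order `p ≤ 23` with generator `σ` acting on a
finitely generated, torsion-free, nonzero abelian group `A` with `A^G = 0` (so the trace map
vanishes on `A`).  Then `H¹(G, A) = A/(1-σ)A ≅ (ℤ/pℤ)^r` where `r·(p-1) = rank_ℤ A`; in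
particular `r > 0`, so `H¹(G, A) ≠ 0`. -/
theorem stmt_6 {p : ℕ} (hp : p.Prime) (hp23 : p ≤ 23) {A : Type*} [AddCommGroup A]
    [Module.Finite ℤ A] [NoZeroSMulDivisors ℤ A] [Nontrivial A]
    (σ : AddAut A) (hσ : p • σ = 0)
    (hinv : ∀ a : A, σ a = a → a = 0) :
    ∃ r : ℕ, 0 < r ∧ r * (p - 1) = Module.finrank ℤ A ∧
      Nonempty ((A ⧸ (AddMonoidHom.id A - AddEquiv.toAddMonoidHom (σ : A ≃+ A)).range)
        ≃+ (Fin r → ZMod p)) :=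
  stmt_6_general hp σ hσ hinv
end

section
/- Let G = ⟨σ⟩ be cyclic of order n acting on an abelian group A generated as a ℤ[G]-module by one element Q, and suppose the trace P = Σ_{ℓ=0}^{n-1} σ^ℓ·Q is a non-torsion element of A^G such that σ^ℓ·Q has trace P for each ℓ. Then an element Σ_ℓ a_ℓ (σ^ℓ·Q) has trace zero if and only if Σ_ℓ a_ℓ = 0, and consequently ker(Tr) = (σ-1)·A, i.e. H¹(G,A) = 0. -/
/-!
Writing `Tr = Σ_{i<n} σ^i`, the hypothesis `Tr (σ^ℓ Q) = P` gives `Tr (Σ_ℓ a_ℓ σ^ℓ Q) = (Σ_ℓ a_ℓ) P`,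
so non-torsion of `P` makes the trace of such an element vanish exactly when `Σ_ℓ a_ℓ = 0`.
In that case the element equals `Σ_ℓ a_ℓ (σ^ℓ Q - Q)`, and each `σ^ℓ Q - Q` is the coboundary
`(σ - 1) (Σ_{j<ℓ} σ^j Q)`. Conversely `Tr ((σ - 1) y) = σ^n y - y = 0` by telescoping.
-/

open Finset

namespace AddAut

section AddCommMonoid

variable {A : Type*} [AddCommMonoid A] (σ : AddAut A)

theorem nsmul_succ_apply (i : ℕ) (x : A) : ((i + 1) • σ) x = (i • σ) (σ x) := by
  rw [succ_nsmul, add_apply]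

theorem nsmul_succ_apply' (i : ℕ) (x : A) : ((i + 1) • σ) x = σ ((i • σ) x) := by
  rw [succ_nsmul', add_apply]

/-- For `n` the order of `σ`, this is the trace (norm map) of the cyclic group generated by `σ`. -/
def trace (n : ℕ) : A →+ A := ∑ i ∈ range n, ((i • σ : AddAut A) : A →+ A)

theorem trace_apply (n : ℕ) (x : A) : trace σ n x = ∑ i ∈ range n, (i • σ) x :=
  AddMonoidHom.finsetSum_apply _ _ _

theorem trace_apply_self (n : ℕ) (x : A) : trace σ n (σ x) = σ (trace σ n x) := by
  simp only [trace_apply, map_sum, ← nsmul_succ_apply, ← nsmul_succ_apply']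

end AddCommMonoid

section AddCommGroup

variable {A : Type*} [AddCommGroup A] (σ : AddAut A)

theorem trace_sum_zsmul_nsmul_apply {n : ℕ} {Q P : A} (htr : ∀ ℓ : ℕ, trace σ n ((ℓ • σ) Q) = P)
    (s : Finset ℕ) (a : ℕ → ℤ) :
    trace σ n (∑ ℓ ∈ s, a ℓ • (ℓ • σ) Q) = (∑ ℓ ∈ s, a ℓ) • P := by
  simp only [map_sum, map_zsmul, htr, sum_smul]

theorem trace_apply_sub (n : ℕ) (y : A) : trace σ n (σ y - y) = (n • σ) y - y := by
  simp only [trace_apply, map_sub, ← nsmul_succ_apply]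
  rw [← sum_sub_distrib, sum_range_sub (fun i => (i • σ) y), zero_nsmul, zero_apply]

theorem nsmul_apply_sub_eq (ℓ : ℕ) (x : A) :
    (ℓ • σ) x - x = σ (trace σ ℓ x) - trace σ ℓ x := by
  rw [← trace_apply_self, ← map_sub, trace_apply_sub]

theorem sum_zsmul_nsmul_apply_eq_sub {s : Finset ℕ} {a : ℕ → ℤ} (ha : ∑ ℓ ∈ s, a ℓ = 0) (Q : A) :
    ∑ ℓ ∈ s, a ℓ • (ℓ • σ) Q =
      σ (∑ ℓ ∈ s, a ℓ • trace σ ℓ Q) - ∑ ℓ ∈ s, a ℓ • trace σ ℓ Q :=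
  calc ∑ ℓ ∈ s, a ℓ • (ℓ • σ) Q
      = ∑ ℓ ∈ s, a ℓ • ((ℓ • σ) Q - Q) := by
        rw [← sub_zero (∑ ℓ ∈ s, _), ← zero_smul ℤ Q, ← ha, sum_smul, ← sum_sub_distrib]
        simp only [smul_sub]
    _ = σ (∑ ℓ ∈ s, a ℓ • trace σ ℓ Q) - ∑ ℓ ∈ s, a ℓ • trace σ ℓ Q := by
        simp only [nsmul_apply_sub_eq, map_sum, map_zsmul, smul_sub, sum_sub_distrib]

end AddCommGroup

end AddAut

open AddAut in
theorem stmt_8_general {A : Type*} [AddCommGroup A] {n : ℕ}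
    (σ : AddAut A) (hσ : n • σ = 0) (Q P : A)
    (hgen : ∀ x : A, ∃ a : ℕ → ℤ, x = ∑ ℓ ∈ Finset.range n, a ℓ • (ℓ • σ) Q)
    (hPnontors : ∀ k : ℤ, k ≠ 0 → k • P ≠ 0)
    (htr : ∀ ℓ : ℕ, (∑ i ∈ Finset.range n, (i • σ) ((ℓ • σ) Q)) = P) :
    (∀ a : ℕ → ℤ,
      (∑ i ∈ Finset.range n, (i • σ) (∑ ℓ ∈ Finset.range n, a ℓ • (ℓ • σ) Q)) = 0 ↔
        (∑ ℓ ∈ Finset.range n, a ℓ) = 0) ∧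
    (∀ x : A, (∑ i ∈ Finset.range n, (i • σ) x) = 0 ↔ ∃ y : A, x = σ y - y) := by
  simp only [← trace_apply] at htr ⊢
  have trace_eq_zero_iff (a : ℕ → ℤ) :
      trace σ n (∑ ℓ ∈ range n, a ℓ • (ℓ • σ) Q) = 0 ↔ ∑ ℓ ∈ range n, a ℓ = 0 := by
    rw [trace_sum_zsmul_nsmul_apply σ htr]
    exact ⟨fun h => by_contra fun hs => hPnontors _ hs h, fun h => by rw [h, zero_smul]⟩
  refine ⟨trace_eq_zero_iff, fun x => ⟨fun hx => ?_, ?_⟩⟩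
  · obtain ⟨a, rfl⟩ := hgen x
    exact ⟨_, sum_zsmul_nsmul_apply_eq_sub σ ((trace_eq_zero_iff a).mp hx) Q⟩
  · rintro ⟨y, rfl⟩
    rw [trace_apply_sub, hσ, zero_apply, sub_self]

/-- let `G = ⟨σ⟩` be cyclic of order `n` acting on an abelian group `A` generated
as a `ℤ[G]`-module by one element `Q`, and suppose the trace `P = Σ_{ℓ=0}^{n-1} σ^ℓ·Q` is a
non-torsion element of `A^G` such that each `σ^ℓ·Q` has trace `P`.  Then an element
`Σ_ℓ a_ℓ (σ^ℓ·Q)` has trace zero iff `Σ_ℓ a_ℓ = 0`, and consequently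
`ker(Tr) = (σ-1)·A`, i.e. `H¹(G, A) = 0`. -/
theorem stmt_8 {A : Type*} [AddCommGroup A] {n : ℕ} (hn : 0 < n)
    (σ : AddAut A) (hσ : n • σ = 0) (Q P : A)
    (hgen : ∀ x : A, ∃ a : ℕ → ℤ, x = ∑ ℓ ∈ Finset.range n, a ℓ • (ℓ • σ) Q)
    (hP : P = ∑ ℓ ∈ Finset.range n, (ℓ • σ) Q)
    (hPfix : σ P = P)
    (hPnontors : ∀ k : ℤ, k ≠ 0 → k • P ≠ 0)
    (htr : ∀ ℓ : ℕ, (∑ i ∈ Finset.range n, (i • σ) ((ℓ • σ) Q)) = P) :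
    (∀ a : ℕ → ℤ,
      (∑ i ∈ Finset.range n, (i • σ) (∑ ℓ ∈ Finset.range n, a ℓ • (ℓ • σ) Q)) = 0 ↔
        (∑ ℓ ∈ Finset.range n, a ℓ) = 0) ∧
    (∀ x : A, (∑ i ∈ Finset.range n, (i • σ) x) = 0 ↔ ∃ y : A, x = σ y - y) :=
  stmt_8_general σ hσ Q P hgen hPnontors htr
end
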